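/- arXiv:1108.2332 — 2 statements merged into one kernel-verified Lean document; each statement's English description precedes it below -/
import Mathlib

section
/- Let Σ = {u=0} be a null hypersurface in a spacetime (M,g) with adapted coordinates (u, x¹, ..., x^{s-1}). The pullback prescription D_a (φ* w_b) := φ*(∇_a w_b) gives a well-defined connection on Σ (i.e., φ*(∇_X W) depends only on the pullback φ*W and not on the choice of extension W) if and only if the Christoffel symbols Γ^u_{ij} of g vanish on Σ for all coordinate indices i, j tangent to Σ. -/
noncomputable section
open scoped BigOperators
open Filter Topology

/-- A point of `ℝⁿ` (local coordinates on the spacetime). -/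
abbrev Pt (n : ℕ) := Fin n → ℝ
/-- A metric in coordinates: a matrix-valued function. -/
abbrev Met (n : ℕ) := Pt n → Matrix (Fin n) (Fin n) ℝ

/-- Partial derivative in the `i`-th coordinate direction. -/
def pd {n : ℕ} (i : Fin n) (f : Pt n → ℝ) (x : Pt n) : ℝ :=
  fderiv ℝ f x (Pi.single i 1)

/-- Inverse metric. -/
def invMet {n : ℕ} (g : Met n) (x : Pt n) : Matrix (Fin n) (Fin n) ℝ := (g x)⁻¹

/-- Christoffel symbols Γ^c_{ab} = (1/2) g^{cd}(∂_a g_{db} + ∂_b g_{ad} - ∂_d g_{ab}) of the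
Levi-Civita connection of `g`. -/
def christoffel {n : ℕ} (g : Met n) (c a b : Fin n) (x : Pt n) : ℝ :=
  (1/2) * ∑ d, invMet g x c d *
    (pd a (fun y => g y d b) x + pd b (fun y => g y a d) x - pd d (fun y => g y a b) x)

/-- Ricci tensor in coordinates. -/
def ricci {n : ℕ} (g : Met n) (a b : Fin n) (x : Pt n) : ℝ :=
  (∑ c, (pd c (christoffel g c a b) x - pd a (christoffel g c c b) x))
  + ∑ c, ∑ d, (christoffel g c c d x * christoffel g d a b x
      - christoffel g c a d x * christoffel g d c b x)

/-- Lie derivative of the metric along the vector field `X`: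
(£_X g)_{ab} = X^c ∂_c g_{ab} + g_{cb} ∂_a X^c + g_{ac} ∂_b X^c. -/
def lieMetric {n : ℕ} (g : Met n) (X : Pt n → Pt n) (a b : Fin n) (x : Pt n) : ℝ :=
  (∑ c, X x c * pd c (fun y => g y a b) x)
  + (∑ c, g x c b * pd a (fun y => X y c) x)
  + (∑ c, g x a c * pd b (fun y => X y c) x)

/-- Covariant derivative of a 1-form: ∇_a w_b = ∂_a w_b - Γ^c_{ab} w_c. -/
def covOneForm {n : ℕ} (g : Met n) (w : Pt n → Pt n) (a b : Fin n) (x : Pt n) : ℝ :=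
  pd a (fun y => w y b) x - ∑ c, christoffel g c a b x * w x c

/-- Smoothness of a metric. -/
def SmoothMet {n : ℕ} (g : Met n) : Prop := ∀ a b, ContDiff ℝ (⊤ : ℕ∞) fun x => g x a b
/-- Symmetry of a metric. -/
def SymmMet {n : ℕ} (g : Met n) : Prop := ∀ x a b, g x a b = g x b a
/-- Pointwise nondegeneracy (invertibility) of a metric. -/
def NondegMet {n : ℕ} (g : Met n) : Prop := ∀ x, IsUnit (g x).det

/-- Hessian ∇_a∇_b f of a function. -/
def hess {n : ℕ} (g : Met n) (f : Pt n → ℝ) (a b : Fin n) (x : Pt n) : ℝ :=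
  pd a (fun y => pd b f y) x - ∑ c, christoffel g c a b x * pd c f x

/-- d'Alembertian □f = g^{ab} ∇_a∇_b f. -/
def box {n : ℕ} (g : Met n) (f : Pt n → ℝ) (x : Pt n) : ℝ :=
  ∑ a, ∑ b, invMet g x a b * hess g f a b x

/-- (∇^m f)(∇_m f) = g^{ab} ∂_a f ∂_b f. -/
def gradSq {n : ℕ} (g : Met n) (f : Pt n → ℝ) (x : Pt n) : ℝ :=
  ∑ a, ∑ b, invMet g x a b * pd a f x * pd b f x

/-- Scalar curvature R = g^{ab} R_{ab}. -/
def scalarCurv {n : ℕ} (g : Met n) (x : Pt n) : ℝ :=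
  ∑ a, ∑ b, invMet g x a b * ricci g a b x

/-- n^a = g^{ab} ∇_b u with u = x⁰: the index-raised normal of Σ = {u = 0}. -/
def nvec {n : ℕ} [NeZero n] (g : Met n) (x : Pt n) : Pt n :=
  fun a => ∑ b, invMet g x a b * pd b (fun y => y 0) x

/-- The pullback prescription D(φ*w) := φ*(∇w) is well defined on Σ = {x⁰ = 0}:
the pullback of ∇w to Σ depends only on the pullback of w, i.e. two smooth
1-forms with the same pullback have covariant derivatives with the same pullback. -/
def PullbackWellDefined {n : ℕ} [NeZero n] (g : Met n) : Prop :=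
  ∀ V W : Pt n → Pt n,
    (∀ i, ContDiff ℝ (⊤ : ℕ∞) fun y => V y i) → (∀ i, ContDiff ℝ (⊤ : ℕ∞) fun y => W y i) →
    (∀ x : Pt n, x 0 = 0 → ∀ i, i ≠ 0 → V x i = W x i) →
    ∀ x : Pt n, x 0 = 0 → ∀ a b : Fin n, a ≠ 0 → b ≠ 0 →
      covOneForm g V a b x = covOneForm g W a b x


lemma pd_vanish {n : ℕ} [NeZero n] {f : Pt n → ℝ} (hf : Differentiable ℝ f)
    (h0 : ∀ x : Pt n, x 0 = 0 → f x = 0) {a : Fin n} (ha : a ≠ 0)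
    {x : Pt n} (hx : x 0 = 0) : pd a f x = 0 := by
  set v : Pt n := Pi.single a 1 with hvdef
  have hv : v 0 = 0 := by simp [hvdef, Pi.single_eq_of_ne (Ne.symm ha)]
  have hL : HasDerivAt (fun t : ℝ => x + t • v) v 0 := by
    simpa using ((hasDerivAt_id (0:ℝ)).smul_const v).const_add x
  have hcomp : HasDerivAt (fun t : ℝ => f (x + t • v)) (fderiv ℝ f x v) 0 := by
    have hfx : HasFDerivAt f (fderiv ℝ f x) (x + (0:ℝ) • v) := by simpa using (hf x).hasFDerivAt
    have h := hfx.comp_hasDerivAt 0 hL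
    exact h
  have hzero : (fun t : ℝ => f (x + t • v)) = fun _ => (0:ℝ) := by
    funext t
    apply h0
    simp [hx, hv]
  rw [hzero] at hcomp
  have := hcomp.unique (hasDerivAt_const 0 0)
  simpa [pd, hvdef] using this

/-- For a null hypersurface Σ = {u = 0} in adapted coordinates
(u = x⁰, x¹, …, x^{s-1}), the pullback prescription D(φ*w) := φ*(∇w) is well defined
(independent of the extension of the 1-form off Σ) if and only if the Christoffel symbols
Γ^u_{ij} vanish on Σ for all tangential indices i, j. -/
theorem pullback_connection_well_defined_iff_christoffel
    {n : ℕ} [NeZero n] (g : Met n)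
    (hsm : SmoothMet g) (hsym : SymmMet g) (hinv : NondegMet g)
    (hnull : ∀ x : Pt n, x 0 = 0 → invMet g x 0 0 = 0) :  -- Σ = {u = 0} is null
    PullbackWellDefined g ↔
      (∀ x : Pt n, x 0 = 0 → ∀ a b : Fin n, a ≠ 0 → b ≠ 0 →
        christoffel g 0 a b x = 0) := by
  constructor
  · intro H x hx a b ha hb
    have key := H (fun _ => Pi.single 0 1) (fun _ => 0)
      (fun i => contDiff_const) (fun i => contDiff_const)
      (fun y hy i hi => by simp [Pi.single_eq_of_ne hi]) x hx a b ha hb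
    have h1 : covOneForm g (fun _ => Pi.single 0 1) a b x = - christoffel g 0 a b x := by
      simp [covOneForm, pd, Pi.single_apply, Finset.sum_ite_eq']
    have h2 : covOneForm g (fun _ => 0) a b x = 0 := by
      simp [covOneForm, pd]
    rw [h1, h2] at key
    linarith
  · intro H V W hV hW hVW x hx a b ha hb
    unfold covOneForm
    have hdV : Differentiable ℝ fun y => V y b := (hV b).differentiable (by simp)
    have hdW : Differentiable ℝ fun y => W y b := (hW b).differentiable (by simp)
    have h1 : pd a (fun y => V y b) x = pd a (fun y => W y b) x := by
      have hd : pd a (fun y => V y b - W y b) x = 0 :=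
        pd_vanish (hdV.sub hdW) (fun y hy => by rw [Pi.sub_apply, hVW y hy b hb]; ring) ha hx
      have h2 : pd a (fun y => V y b - W y b) x
          = pd a (fun y => V y b) x - pd a (fun y => W y b) x := by
        unfold pd
        rw [fderiv_fun_sub (hdV x) (hdW x)]
        simp
      rw [h2] at hd
      linarith
    rw [h1]
    congr 1
    refine Finset.sum_congr rfl fun c _ => ?_
    by_cases hc : c = 0
    · subst hc
      rw [H x hx a b ha hb]
      ring
    · rw [hVW x hx c hc]
end
end

section
/- Let Σ = {u=0} be a null hypersurface of (M,g), n_a = ∇_a u its null normal, and q_ab the pullback of g_ab to Σ. If the pullback to Σ of £_n g_ab vanishes (equivalently £_n q_ab = 0 in the sense that the pullback of 2∇_a n_b vanishes), then the pullback connection D_a(φ* w_b) := φ*(∇_a w_b) is well-defined on Σ: for any two 1-forms V, W on M with equal pullbacks to Σ, the pullbacks of ∇V and ∇W to Σ agree. -/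
noncomputable section
open scoped BigOperators
open Filter Topology

namespace PfAux

variable {n : ℕ}

lemma pd_sub {f h : Pt n → ℝ} {x : Pt n} (a : Fin n)
    (hf : DifferentiableAt ℝ f x) (hh : DifferentiableAt ℝ h x) :
    pd a (fun y => f y - h y) x = pd a f x - pd a h x := by
  simp [pd, fderiv_fun_sub hf hh]

lemma pd_mul {f h : Pt n → ℝ} {x : Pt n} (a : Fin n)
    (hf : DifferentiableAt ℝ f x) (hh : DifferentiableAt ℝ h x) :
    pd a (fun y => f y * h y) x = pd a f x * h x + f x * pd a h x := by
  simp [pd, fderiv_fun_mul hf hh]; ring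

lemma pd_sum {ι : Type*} {s : Finset ι} {F : ι → Pt n → ℝ} {x : Pt n} (a : Fin n)
    (hF : ∀ i ∈ s, DifferentiableAt ℝ (F i) x) :
    pd a (fun y => ∑ i ∈ s, F i y) x = ∑ i ∈ s, pd a (F i) x := by
  simp [pd, fderiv_fun_sum hF]

/-- Tangential derivative of a function vanishing on `{x 0 = 0}` is zero. -/
lemma pd_tangent [NeZero n] {h : Pt n → ℝ} (hd : Differentiable ℝ h)
    (h0 : ∀ y : Pt n, y 0 = 0 → h y = 0) {x : Pt n} (hx : x 0 = 0)
    {a : Fin n} (ha : a ≠ 0) : pd a h x = 0 := by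
  classical
  set v : Pt n := Pi.single a 1 with hv
  have hline : HasDerivAt (fun t : ℝ => x + t • v) v 0 := by
    simpa using ((hasDerivAt_id (0 : ℝ)).smul_const v).const_add x
  have h1 : HasFDerivAt h (fderiv ℝ h x) (x + (0 : ℝ) • v) := by
    simpa using (hd x).hasFDerivAt
  have hcomp : HasDerivAt (fun t : ℝ => h (x + t • v)) (fderiv ℝ h x v) 0 :=
    h1.comp_hasDerivAt 0 hline
  have hzero : (fun t : ℝ => h (x + t • v)) = fun _ => (0 : ℝ) := by
    funext t
    apply h0
    have : v 0 = 0 := Pi.single_eq_of_ne (Ne.symm ha) 1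
    simp [hx, this]
  rw [hzero] at hcomp
  have := hcomp.unique (hasDerivAt_const 0 0)
  simpa [pd, hv] using this

lemma contDiff_det {M : Pt n → Matrix (Fin n) (Fin n) ℝ}
    (hM : ∀ i j, ContDiff ℝ (⊤ : ℕ∞) fun y => M y i j) :
    ContDiff ℝ (⊤ : ℕ∞) fun y => (M y).det := by
  have : (fun y => (M y).det) = fun y => ∑ σ : Equiv.Perm (Fin n),
      ((Equiv.Perm.sign σ : ℤ) : ℝ) * ∏ i, M y (σ i) i := by
    funext y
    rw [Matrix.det_apply]
    refine Finset.sum_congr rfl fun σ _ => ?_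
    rw [Units.smul_def, zsmul_eq_mul]
  rw [this]
  exact ContDiff.sum fun σ _ =>
    contDiff_const.mul (contDiff_prod fun i _ => hM (σ i) i)

lemma contDiff_invMet (g : Met n) (hsm : SmoothMet g) (hinv : NondegMet g)
    (c d : Fin n) : ContDiff ℝ (⊤ : ℕ∞) fun y => invMet g y c d := by
  have hdet : ContDiff ℝ (⊤ : ℕ∞) fun y => (g y).det := contDiff_det hsm
  have hadj : ContDiff ℝ (⊤ : ℕ∞) fun y => (g y).adjugate c d := by
    have h1 : (fun y => (g y).adjugate c d)
        = fun y => ((g y).updateRow d (Pi.single c 1)).det := by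
      funext y; exact Matrix.adjugate_apply (g y) c d
    rw [h1]
    refine contDiff_det fun i j => ?_
    by_cases hid : i = d
    · simp only [hid, Matrix.updateRow_self]; exact contDiff_const
    · simp only [Matrix.updateRow_apply, hid, if_false]; exact hsm i j
  have h2 : (fun y => invMet g y c d)
      = fun y => ((g y).det)⁻¹ * (g y).adjugate c d := by
    funext y
    rw [invMet, Matrix.inv_def]
    simp [Ring.inverse_eq_inv', Matrix.smul_apply, smul_eq_mul]
  rw [h2]
  exact (hdet.inv fun y => (hinv y).ne_zero).mul hadj

lemma mul_inv_delta (g : Met n) (hinv : NondegMet g) (y : Pt n) (b d : Fin n) :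
    ∑ c, g y b c * invMet g y c d = if b = d then 1 else 0 := by
  have h := Matrix.mul_nonsing_inv (g y) (hinv y)
  have h2 := congrFun (congrFun h b) d
  simpa [Matrix.mul_apply, Matrix.one_apply, invMet] using h2

lemma invMet_symm (g : Met n) (hsym : SymmMet g) (y : Pt n) (c d : Fin n) :
    invMet g y c d = invMet g y d c := by
  have hT : Matrix.transpose (g y) = g y := by
    ext i j; exact hsym y j i
  have h := Matrix.transpose_nonsing_inv (g y)
  rw [hT] at h
  have := congrFun (congrFun h d) c
  simpa [invMet, Matrix.transpose_apply] using this

lemma pd_coord [NeZero n] (b : Fin n) (x : Pt n) (i : Fin n) :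
    pd b (fun y : Pt n => y i) x = if i = b then 1 else 0 := by
  have h1 : (fun y : Pt n => y i)
      = (ContinuousLinearMap.proj i : (Fin n → ℝ) →L[ℝ] ℝ) := rfl
  rw [pd, h1, ContinuousLinearMap.fderiv]
  simp [Pi.single_apply]

lemma nvec_eq [NeZero n] (g : Met n) (y : Pt n) (c : Fin n) :
    nvec g y c = invMet g y c 0 := by
  simp [nvec, pd_coord, mul_ite, Finset.sum_ite_eq]

/-- Key step: differentiating `g · g⁻¹ = const` (product rule). -/
lemma sum_pd_inv (g : Met n) [NeZero n] (hsm : SmoothMet g) (hinv : NondegMet g)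
    (a r : Fin n) (x : Pt n) :
    ∑ c, g x r c * pd a (fun y => invMet g y c 0) x
      = - ∑ c, pd a (fun y => g y r c) x * invMet g x c 0 := by
  have dG : ∀ i j, DifferentiableAt ℝ (fun y => g y i j) x :=
    fun i j => ((hsm i j).differentiable (by simp)).differentiableAt
  have dI : ∀ i j, DifferentiableAt ℝ (fun y => invMet g y i j) x :=
    fun i j => (((contDiff_invMet g hsm hinv i j)).differentiable (by simp)).differentiableAt
  have hF : (fun y => ∑ c, g y r c * invMet g y c 0)
      = fun _ => if r = 0 then (1 : ℝ) else 0 := by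
    funext y; exact mul_inv_delta g hinv y r 0
  have h0 : pd a (fun y => ∑ c, g y r c * invMet g y c 0) x = 0 := by
    rw [hF]; simp [pd]
  rw [pd_sum (F := fun c y => g y r c * invMet g y c 0) a (fun c _ => (dG r c).mul (dI c 0))] at h0
  have hterm : ∀ c : Fin n, pd a (fun y => g y r c * invMet g y c 0) x
      = pd a (fun y => g y r c) x * invMet g x c 0
        + g x r c * pd a (fun y => invMet g y c 0) x :=
    fun c => pd_mul a (dG r c) (dI c 0)
  rw [Finset.sum_congr rfl fun c _ => hterm c, Finset.sum_add_distrib] at h0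
  linarith

/-- Coordinate identity: `Γ⁰_{ab} = -(1/2) (£_n g)_{ab}` when `n^a = g^{a0}`. -/
lemma christoffel_zero_eq (g : Met n) [NeZero n] (hsm : SmoothMet g)
    (hsym : SymmMet g) (hinv : NondegMet g) (a b : Fin n) (x : Pt n) :
    christoffel g 0 a b x = -(1/2) * lieMetric g (nvec g) a b x := by
  have hgfun : ∀ i j : Fin n, (fun y => g y i j) = fun y => g y j i := by
    intro i j; funext y; exact hsym y i j
  have hL : lieMetric g (nvec g) a b x
      = (∑ c, invMet g x c 0 * pd c (fun y => g y a b) x)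
        - (∑ c, pd a (fun y => g y b c) x * invMet g x c 0)
        - (∑ c, pd b (fun y => g y a c) x * invMet g x c 0) := by
    have e1 : ∀ c : Fin n, nvec g x c = invMet g x c 0 := nvec_eq g x
    have e2 : ∀ c : Fin n, (fun y => nvec g y c) = fun y => invMet g y c 0 := by
      intro c; funext y; exact nvec_eq g y c
    have hT2 : ∑ c, g x c b * pd a (fun y => nvec g y c) x
        = - ∑ c, pd a (fun y => g y b c) x * invMet g x c 0 := by
      rw [show (∑ c, g x c b * pd a (fun y => nvec g y c) x)
          = ∑ c, g x b c * pd a (fun y => invMet g y c 0) x from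
        Finset.sum_congr rfl fun c _ => by rw [hsym x c b, e2 c]]
      exact sum_pd_inv g hsm hinv a b x
    have hT3 : ∑ c, g x a c * pd b (fun y => nvec g y c) x
        = - ∑ c, pd b (fun y => g y a c) x * invMet g x c 0 := by
      rw [show (∑ c, g x a c * pd b (fun y => nvec g y c) x)
          = ∑ c, g x a c * pd b (fun y => invMet g y c 0) x from
        Finset.sum_congr rfl fun c _ => by rw [e2 c]]
      exact sum_pd_inv g hsm hinv b a x
    rw [lieMetric, hT2, hT3]
    rw [show (∑ c, nvec g x c * pd c (fun y => g y a b) x)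
        = ∑ c, invMet g x c 0 * pd c (fun y => g y a b) x from
      Finset.sum_congr rfl fun c _ => by rw [e1 c]]
    ring
  have hC : christoffel g 0 a b x
      = ∑ c, (1/2) * (invMet g x c 0 * (pd a (fun y => g y b c) x
          + pd b (fun y => g y a c) x - pd c (fun y => g y a b) x)) := by
    rw [christoffel, Finset.mul_sum]
    refine Finset.sum_congr rfl fun d _ => ?_
    rw [invMet_symm g hsym x 0 d, hgfun d b]
  rw [hC, hL]
  rw [show -(1/2) * ((∑ c, invMet g x c 0 * pd c (fun y => g y a b) x)
        - (∑ c, pd a (fun y => g y b c) x * invMet g x c 0)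
        - (∑ c, pd b (fun y => g y a c) x * invMet g x c 0))
      = (1/2) * ((∑ c, pd a (fun y => g y b c) x * invMet g x c 0)
        + (∑ c, pd b (fun y => g y a c) x * invMet g x c 0)
        - (∑ c, invMet g x c 0 * pd c (fun y => g y a b) x)) from by ring]
  rw [← Finset.sum_add_distrib, ← Finset.sum_sub_distrib, Finset.mul_sum]
  exact Finset.sum_congr rfl fun c _ => by ring

end PfAux

/-- Let Σ = {u = 0} be a null hypersurface with null normal n^a = ∇^a u.
If the pullback of £_n g_ab to Σ vanishes, then the pullback connection is well defined:
any two smooth 1-forms with equal pullbacks to Σ have covariant derivatives with equal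
pullbacks to Σ. -/
theorem killing_normal_gives_pullback_connection
    {n : ℕ} [NeZero n] (g : Met n)
    (hsm : SmoothMet g) (hsym : SymmMet g) (hinv : NondegMet g)
    (hnull : ∀ x : Pt n, x 0 = 0 → invMet g x 0 0 = 0)        -- n is null on Σ
    (hnz : ∀ x : Pt n, x 0 = 0 → nvec g x ≠ 0)                -- n is nonzero on Σ
    (hKill : ∀ x : Pt n, x 0 = 0 → ∀ a b : Fin n, a ≠ 0 → b ≠ 0 →
      lieMetric g (nvec g) a b x = 0) :                        -- pullback of £_n g vanishes
    PullbackWellDefined g := by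
  intro V W hV hW hVW x hx a b ha hb
  have dV : ∀ i, DifferentiableAt ℝ (fun y => V y i) x :=
    fun i => ((hV i).differentiable (by simp)).differentiableAt
  have dW : ∀ i, DifferentiableAt ℝ (fun y => W y i) x :=
    fun i => ((hW i).differentiable (by simp)).differentiableAt
  have hGamma0 : christoffel g 0 a b x = 0 := by
    rw [PfAux.christoffel_zero_eq g hsm hsym hinv a b x, hKill x hx a b ha hb]
    ring
  have hpd : pd a (fun y => V y b) x = pd a (fun y => W y b) x := by
    have hdiff : pd a (fun y => V y b - W y b) x = 0 := by
      refine PfAux.pd_tangent ?_ ?_ hx ha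
      · exact ((hV b).sub (hW b)).differentiable (by simp)
      · intro y hy
        rw [hVW y hy b hb]; ring
    rw [PfAux.pd_sub a (dV b) (dW b)] at hdiff
    linarith
  unfold covOneForm
  rw [hpd]
  congr 1
  refine Finset.sum_congr rfl fun c _ => ?_
  by_cases hc : c = 0
  · subst hc; rw [hGamma0]; ring
  · rw [hVW x hx c hc]
end
end
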